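/- arXiv:1708.01567 — 2 statements merged into one kernel-verified Lean document; each statement's English description precedes it below -/
import Mathlib

section
/- For every measurable u : ℝ^n_+ → ℝ with u ∈ L^{2*_s}(ℝ^n_+) and E_s(u;ℝ^n_+×ℝ^n_+) < ∞ one has E_s(u;ℝ^n_+×ℝ^n_+) ≥ (1/4)·S_s·‖u‖²_{L^{2*_s}(ℝ^n_+)}. In particular the restricted space D^s_R(ℝ^n_+) is continuously embedded into L^{2*_s}(ℝ^n_+). -/
open MeasureTheory Set Filter Topology
open scoped ENNReal

noncomputable section

/-- Euclidean space `ℝ^n`. -/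
abbrev Rn (n : ℕ) : Type := EuclideanSpace ℝ (Fin n)

/-- The half-space `ℝ^n_+` of points with positive first coordinate. -/
def Hplus (n : ℕ) [NeZero n] : Set (Rn n) := {x : Rn n | 0 < x 0}

/-- The half-space `ℝ^n_-` of points with negative first coordinate. -/
def Hminus (n : ℕ) [NeZero n] : Set (Rn n) := {x : Rn n | x 0 < 0}

/-- The normalization constant `C_{n,s} = s·2^{2s}·Γ(n/2+s)/(π^{n/2}·Γ(1−s))`. -/
def Cns (n : ℕ) (s : ℝ) : ℝ :=
  s * (2 : ℝ) ^ (2 * s) * Real.Gamma ((n : ℝ) / 2 + s) /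
    (Real.pi ^ ((n : ℝ) / 2) * Real.Gamma (1 - s))

/-- The quadratic form `E_s(u; Z) = (C_{n,s}/2)·∬_Z (u(x)−u(y))²/|x−y|^{n+2s} dx dy`,
valued in `ℝ≥0∞` (the integrand is nonnegative). -/
def Es (n : ℕ) (s : ℝ) (u : Rn n → ℝ) (Z : Set (Rn n × Rn n)) : ℝ≥0∞ :=
  ENNReal.ofReal (Cns n s / 2) *
    ∫⁻ p in Z, ENNReal.ofReal ((u p.1 - u p.2) ^ 2 / ‖p.1 - p.2‖ ^ ((n : ℝ) + 2 * s))

/-- The critical exponent `2*_s = 2n/(n−2s)` as an extended real. -/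
def pStar (n : ℕ) (s : ℝ) : ℝ≥0∞ := ENNReal.ofReal (2 * n / (n - 2 * s))

/-- The constant `γ_s = 2^{2s−1}·Γ(s+1/2)/(√π·Γ(1−s))`. -/
def gammaS (s : ℝ) : ℝ :=
  (2 : ℝ) ^ (2 * s - 1) * Real.Gamma (s + 1 / 2) / (Real.sqrt Real.pi * Real.Gamma (1 - s))

/-- The semirestricted domain `Z = (ℝ^n×ℝ^n) ∖ (ℝ^n_-×ℝ^n_-)`. -/
def Zsr (n : ℕ) [NeZero n] : Set (Rn n × Rn n) := Set.univ \ ((Hminus n) ×ˢ (Hminus n))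

/-- The fractional Sobolev constant `S_s`: the infimum of
`E_s(u;ℝ^n×ℝ^n)/‖u‖²_{L^{2*_s}(ℝ^n)}` over admissible `u`. -/
def Ss (n : ℕ) (s : ℝ) : ℝ≥0∞ :=
  sInf { r : ℝ≥0∞ | ∃ u : Rn n → ℝ, Measurable u ∧
    eLpNorm u (pStar n s) volume < ⊤ ∧
    Es n s u Set.univ < ⊤ ∧
    ¬ (u =ᵐ[volume] 0) ∧
    r = Es n s u Set.univ / (eLpNorm u (pStar n s) volume) ^ 2 }

/-- The restricted Neumann Sobolev constant `S^R_s(ℝ^n_+)`. -/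
def SR (n : ℕ) [NeZero n] (s : ℝ) : ℝ≥0∞ :=
  sInf { r : ℝ≥0∞ | ∃ u : Rn n → ℝ, Measurable u ∧
    eLpNorm u (pStar n s) (volume.restrict (Hplus n)) < ⊤ ∧
    Es n s u ((Hplus n) ×ˢ (Hplus n)) < ⊤ ∧
    ¬ (u =ᵐ[volume.restrict (Hplus n)] 0) ∧
    r = Es n s u ((Hplus n) ×ˢ (Hplus n)) /
        (eLpNorm u (pStar n s) (volume.restrict (Hplus n))) ^ 2 }

/-- The semirestricted Neumann Sobolev constant `S^Sr_s(ℝ^n_+)`. -/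
def SSr (n : ℕ) [NeZero n] (s : ℝ) : ℝ≥0∞ :=
  sInf { r : ℝ≥0∞ | ∃ u : Rn n → ℝ, Measurable u ∧
    eLpNorm u (pStar n s) (volume.restrict (Hplus n)) < ⊤ ∧
    Es n s u (Zsr n) < ⊤ ∧
    ¬ (u =ᵐ[volume.restrict (Hplus n)] 0) ∧
    r = Es n s u (Zsr n) /
        (eLpNorm u (pStar n s) (volume.restrict (Hplus n))) ^ 2 }

/-! Reflect `u` evenly across `∂ℝ^n_+`. The reflected function `v` has the same `L^{2*_s}`
norm on each half-space. Its energy on `ℝ^n × ℝ^n` splits into four quadrant integrals. Each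
one is at most `E_s(u; ℝ^n_+ × ℝ^n_+)`, because for `x, y ∈ ℝ^n_+` the point `x` is closer
to `y` than to the mirror image of `y`. So `S_s ‖u‖² ≤ S_s ‖v‖² ≤ E_s(v) ≤ 4 E_s(u)`. -/

theorem Ss_mul_eLpNorm_sq_le {n : ℕ} {s : ℝ} {v : Rn n → ℝ} (hv : Measurable v)
    (hLp : eLpNorm v (pStar n s) volume < ⊤) :
    Ss n s * eLpNorm v (pStar n s) volume ^ 2 ≤ Es n s v univ := by
  rcases eq_top_or_lt_top (Es n s v univ) with hE | hE
  · exact hE ▸ le_top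
  by_cases hv0 : v =ᵐ[volume] 0
  · simp [eLpNorm_congr_ae hv0]
  set N := eLpNorm v (pStar n s) volume
  rcases eq_or_ne N 0 with hN | hN
  · simp [hN]
  have hSs : Ss n s ≤ Es n s v univ / N ^ 2 := sInf_le ⟨v, hv, hLp, hE, hv0, rfl⟩
  calc Ss n s * N ^ 2 ≤ Es n s v univ / N ^ 2 * N ^ 2 := by gcongr
    _ = Es n s v univ := ENNReal.div_mul_cancel (pow_ne_zero 2 hN) (ENNReal.pow_ne_top hLp.ne)

section Measure

variable {α : Type*} [MeasurableSpace α] {μ : Measure α}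

theorem MeasureTheory.MeasurePreserving.restrict_add_map_restrict_eq {σ : α → α}
    (hσ : MeasurePreserving σ μ μ) (hσe : MeasurableEmbedding σ) (hσi : Function.Involutive σ)
    {A : Set α} (hA : MeasurableSet A) (hdisj : Disjoint A (σ ⁻¹' A))
    (hcover : μ (A ∪ σ ⁻¹' A)ᶜ = 0) :
    μ.restrict A + (μ.restrict A).map σ = μ := by
  have hmap : (μ.restrict A).map σ = μ.restrict (σ ⁻¹' A) := by
    have := (hσ.restrict_preimage_emb hσe (σ ⁻¹' A)).map_eq
    rwa [hσi.preimage A] at this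
  rw [hmap, ← Measure.restrict_union hdisj (hσe.measurable hA),
    Measure.restrict_congr_set (ae_eq_univ.mpr hcover), Measure.restrict_univ]

theorem lintegral_prod_add_map [SFinite μ] {σ : α → α} (hσ : Measurable σ)
    {F : α × α → ℝ≥0∞} (hF : Measurable F) :
    ∫⁻ q, F q ∂((μ + μ.map σ).prod (μ + μ.map σ)) =
      ∫⁻ q, F q + F (q.1, σ q.2) + F (σ q.1, q.2) + F (σ q.1, σ q.2) ∂(μ.prod μ) := by
  have hmap_left : (μ.map σ).prod μ = (μ.prod μ).map (Prod.map σ id) := by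
    simpa only [Measure.map_id] using Measure.map_prod_map μ μ hσ measurable_id
  have hmap_right : μ.prod (μ.map σ) = (μ.prod μ).map (Prod.map id σ) := by
    simpa only [Measure.map_id] using Measure.map_prod_map μ μ measurable_id hσ
  have hmap_both : (μ.map σ).prod (μ.map σ) = (μ.prod μ).map (Prod.map σ σ) :=
    Measure.map_prod_map μ μ hσ hσ
  rw [Measure.add_prod, Measure.prod_add, Measure.prod_add, hmap_left, hmap_right, hmap_both,
    lintegral_add_measure, lintegral_add_measure, lintegral_add_measure,
    lintegral_map hF (measurable_id.prodMap hσ), lintegral_map hF (hσ.prodMap measurable_id),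
    lintegral_map hF (hσ.prodMap hσ), lintegral_add_left (by fun_prop),
    lintegral_add_left (by fun_prop), lintegral_add_left (by fun_prop)]
  simp only [Prod.map, id]
  ring

theorem eLpNorm_add_measure_lt_top {E : Type*} [NormedAddCommGroup E] {ν : Measure α}
    {f : α → E} {p : ℝ≥0∞} (hp : p ≠ ⊤) (hμ : eLpNorm f p μ < ⊤) (hν : eLpNorm f p ν < ⊤) :
    eLpNorm f p (μ + ν) < ⊤ := by
  rcases eq_or_ne p 0 with rfl | hp0
  · simp
  simp only [eLpNorm_lt_top_iff_lintegral_rpow_enorm_lt_top hp0 hp, lintegral_add_measure]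
    at hμ hν ⊢
  exact ENNReal.add_lt_top.mpr ⟨hμ, hν⟩

end Measure

section Reflection

variable {n : ℕ} [NeZero n]

def firstCoordReflection (n : ℕ) [NeZero n] : Rn n ≃ₗᵢ[ℝ] Rn n :=
  LinearIsometryEquiv.piLpCongrRight 2
    (fun i => if i = 0 then LinearIsometryEquiv.neg ℝ else LinearIsometryEquiv.refl ℝ ℝ)

@[simp]
theorem firstCoordReflection_apply_zero (x : Rn n) : firstCoordReflection n x 0 = -x 0 := by
  simp [firstCoordReflection, LinearIsometryEquiv.piLpCongrRight_apply]

theorem firstCoordReflection_apply_of_ne {i : Fin n} (hi : i ≠ 0) (x : Rn n) :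
    firstCoordReflection n x i = x i := by
  simp [firstCoordReflection, LinearIsometryEquiv.piLpCongrRight_apply, hi]

theorem firstCoordReflection_involutive : Function.Involutive (firstCoordReflection n) := by
  intro x
  ext i
  rcases eq_or_ne i 0 with rfl | hi
  · simp
  · rw [firstCoordReflection_apply_of_ne hi, firstCoordReflection_apply_of_ne hi]

theorem measurableEmbedding_firstCoordReflection :
    MeasurableEmbedding (firstCoordReflection n) :=
  (firstCoordReflection n).toHomeomorph.toMeasurableEquiv.measurableEmbedding

theorem preimage_firstCoordReflection_Hplus :
    firstCoordReflection n ⁻¹' Hplus n = Hminus n := by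
  ext x
  simp [Hplus, Hminus]

theorem norm_sub_le_norm_sub_firstCoordReflection {x y : Rn n} (hx : x ∈ Hplus n)
    (hy : y ∈ Hplus n) : ‖x - y‖ ≤ ‖x - firstCoordReflection n y‖ := by
  rw [EuclideanSpace.norm_eq, EuclideanSpace.norm_eq]
  refine Real.sqrt_le_sqrt (Finset.sum_le_sum fun i _ => ?_)
  simp only [PiLp.sub_apply, Real.norm_eq_abs, sq_abs]
  rcases eq_or_ne i 0 with rfl | hi
  · rw [firstCoordReflection_apply_zero]
    nlinarith [mul_pos (show 0 < x 0 from hx) (show 0 < y 0 from hy)]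
  · rw [firstCoordReflection_apply_of_ne hi]

theorem measurableSet_Hplus : MeasurableSet (Hplus n) :=
  measurableSet_lt measurable_const (by fun_prop)

theorem volume_setOf_apply_zero_eq_zero : volume {x : Rn n | x 0 = 0} = 0 := by
  have hker : {x : Rn n | x 0 = 0} =
      LinearMap.ker (EuclideanSpace.projₗ (𝕜 := ℝ) (0 : Fin n)) := by
    ext x
    simp [EuclideanSpace.projₗ]
  rw [hker]
  refine Measure.addHaar_submodule _ _ fun htop => ?_
  have hsingle : EuclideanSpace.single 0 (1 : ℝ) ∈
      LinearMap.ker (EuclideanSpace.projₗ (𝕜 := ℝ) (0 : Fin n)) := htop ▸ trivial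
  simp [EuclideanSpace.projₗ] at hsingle

theorem volume_eq_restrict_Hplus_add_map :
    (volume : Measure (Rn n)) =
      volume.restrict (Hplus n) + (volume.restrict (Hplus n)).map (firstCoordReflection n) := by
  refine ((firstCoordReflection n).measurePreserving.restrict_add_map_restrict_eq
    measurableEmbedding_firstCoordReflection firstCoordReflection_involutive
    measurableSet_Hplus ?_ ?_).symm
  · rw [preimage_firstCoordReflection_Hplus]
    exact Set.disjoint_left.mpr fun x (hx : 0 < x 0) (hx' : x 0 < 0) => hx.not_gt hx'
  · refine measure_mono_null (fun x hx => ?_) volume_setOf_apply_zero_eq_zero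
    rw [preimage_firstCoordReflection_Hplus, Set.compl_union] at hx
    exact le_antisymm (not_lt.mp hx.1) (not_lt.mp hx.2)

end Reflection

section EvenExtension

variable {n : ℕ} [NeZero n] {u : Rn n → ℝ}

def evenExtension (u : Rn n → ℝ) (x : Rn n) : ℝ :=
  if 0 < x 0 then u x else u (firstCoordReflection n x)

theorem evenExtension_of_mem {x : Rn n} (hx : x ∈ Hplus n) : evenExtension u x = u x :=
  if_pos hx

theorem evenExtension_firstCoordReflection {x : Rn n} (hx : x ∈ Hplus n) :
    evenExtension u (firstCoordReflection n x) = u x := by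
  have hx' : ¬ 0 < firstCoordReflection n x 0 := by
    simpa using (show 0 < x 0 from hx).le
  rw [evenExtension, if_neg hx', firstCoordReflection_involutive]

theorem Measurable.evenExtension (hu : Measurable u) : Measurable (evenExtension u) :=
  Measurable.ite measurableSet_Hplus hu (hu.comp (firstCoordReflection n).continuous.measurable)

theorem evenExtension_ae_eq : evenExtension u =ᵐ[volume.restrict (Hplus n)] u :=
  (ae_restrict_iff' measurableSet_Hplus).mpr (ae_of_all _ fun _ => evenExtension_of_mem)

theorem evenExtension_comp_firstCoordReflection_ae_eq :
    evenExtension u ∘ firstCoordReflection n =ᵐ[volume.restrict (Hplus n)] u :=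
  (ae_restrict_iff' measurableSet_Hplus).mpr
    (ae_of_all _ fun _ => evenExtension_firstCoordReflection)

theorem eLpNorm_restrict_Hplus_le_evenExtension (p : ℝ≥0∞) :
    eLpNorm u p (volume.restrict (Hplus n)) ≤ eLpNorm (evenExtension u) p volume := by
  rw [← eLpNorm_congr_ae evenExtension_ae_eq]
  exact eLpNorm_mono_measure _ Measure.restrict_le_self

theorem eLpNorm_evenExtension_lt_top {p : ℝ≥0∞} (hp : p ≠ ⊤)
    (hLp : eLpNorm u p (volume.restrict (Hplus n)) < ⊤) :
    eLpNorm (evenExtension u) p volume < ⊤ := by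
  rw [volume_eq_restrict_Hplus_add_map]
  refine eLpNorm_add_measure_lt_top hp ?_ ?_
  · rwa [eLpNorm_congr_ae evenExtension_ae_eq]
  · rwa [measurableEmbedding_firstCoordReflection.eLpNorm_map_measure,
      eLpNorm_congr_ae evenExtension_comp_firstCoordReflection_ae_eq]

end EvenExtension

section Energy

variable {n : ℕ} {s : ℝ} {u : Rn n → ℝ}

def energyDensity (n : ℕ) (s : ℝ) (u : Rn n → ℝ) (q : Rn n × Rn n) : ℝ≥0∞ :=
  ENNReal.ofReal ((u q.1 - u q.2) ^ 2 / ‖q.1 - q.2‖ ^ ((n : ℝ) + 2 * s))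

theorem Es_eq_lintegral_energyDensity (Z : Set (Rn n × Rn n)) :
    Es n s u Z = ENNReal.ofReal (Cns n s / 2) * ∫⁻ q in Z, energyDensity n s u q :=
  rfl

theorem Measurable.energyDensity (hu : Measurable u) : Measurable (energyDensity n s u) := by
  unfold _root_.energyDensity
  fun_prop

variable [NeZero n]

theorem energyDensity_firstCoordReflection_le (hα : 0 ≤ (n : ℝ) + 2 * s) {x y : Rn n}
    (hx : x ∈ Hplus n) (hy : y ∈ Hplus n) :
    ENNReal.ofReal ((u x - u y) ^ 2 / ‖x - firstCoordReflection n y‖ ^ ((n : ℝ) + 2 * s)) ≤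
      energyDensity n s u (x, y) := by
  refine ENNReal.ofReal_le_ofReal ?_
  rcases eq_or_ne x y with rfl | hxy
  · simp
  exact div_le_div_of_nonneg_left (sq_nonneg _)
    (Real.rpow_pos_of_pos (norm_pos_iff.mpr (sub_ne_zero.mpr hxy)) _)
    (Real.rpow_le_rpow (norm_nonneg _) (norm_sub_le_norm_sub_firstCoordReflection hx hy) hα)

theorem energyDensity_evenExtension_quadrants_le (hα : 0 ≤ (n : ℝ) + 2 * s) {x y : Rn n}
    (hx : x ∈ Hplus n) (hy : y ∈ Hplus n) :
    energyDensity n s (evenExtension u) (x, y) +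
        energyDensity n s (evenExtension u) (x, firstCoordReflection n y) +
        energyDensity n s (evenExtension u) (firstCoordReflection n x, y) +
        energyDensity n s (evenExtension u) (firstCoordReflection n x, firstCoordReflection n y) ≤
      4 * energyDensity n s u (x, y) := by
  set R := firstCoordReflection n
  have hxR : evenExtension u (R x) = u x := evenExtension_firstCoordReflection hx
  have hyR : evenExtension u (R y) = u y := evenExtension_firstCoordReflection hy
  have hdist : ‖R x - y‖ = ‖x - R y‖ := by
    rw [← R.norm_map, map_sub, firstCoordReflection_involutive]
  have hdistR : ‖R x - R y‖ = ‖x - y‖ := by rw [← map_sub, R.norm_map]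
  have h₁ : energyDensity n s (evenExtension u) (x, y) = energyDensity n s u (x, y) := by
    simp only [energyDensity, evenExtension_of_mem hx, evenExtension_of_mem hy]
  have h₂ : energyDensity n s (evenExtension u) (x, R y) ≤ energyDensity n s u (x, y) := by
    simp only [energyDensity, evenExtension_of_mem hx, hyR]
    exact energyDensity_firstCoordReflection_le hα hx hy
  have h₃ : energyDensity n s (evenExtension u) (R x, y) ≤ energyDensity n s u (x, y) := by
    simp only [energyDensity, hxR, evenExtension_of_mem hy, hdist]
    exact energyDensity_firstCoordReflection_le hα hx hy
  have h₄ : energyDensity n s (evenExtension u) (R x, R y) = energyDensity n s u (x, y) := by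
    simp only [energyDensity, hxR, hyR, hdistR]
  calc _ ≤ energyDensity n s u (x, y) + energyDensity n s u (x, y) +
        energyDensity n s u (x, y) + energyDensity n s u (x, y) := by
        rw [h₁, h₄]; gcongr
    _ = 4 * energyDensity n s u (x, y) := by ring

theorem Es_evenExtension_le (hα : 0 ≤ (n : ℝ) + 2 * s) (hu : Measurable u) :
    Es n s (evenExtension u) univ ≤ 4 * Es n s u (Hplus n ×ˢ Hplus n) := by
  have hquadrants : ∫⁻ q, energyDensity n s (evenExtension u) q =
      ∫⁻ q in Hplus n ×ˢ Hplus n, energyDensity n s (evenExtension u) q +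
        energyDensity n s (evenExtension u) (q.1, firstCoordReflection n q.2) +
        energyDensity n s (evenExtension u) (firstCoordReflection n q.1, q.2) +
        energyDensity n s (evenExtension u)
          (firstCoordReflection n q.1, firstCoordReflection n q.2) := by
    rw [Measure.volume_eq_prod]
    conv_lhs => rw [volume_eq_restrict_Hplus_add_map]
    rw [lintegral_prod_add_map (firstCoordReflection n).continuous.measurable
      hu.evenExtension.energyDensity, Measure.prod_restrict]
  rw [Es_eq_lintegral_energyDensity, Es_eq_lintegral_energyDensity, Measure.restrict_univ,
    hquadrants, mul_left_comm, ← lintegral_const_mul 4 hu.energyDensity]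
  gcongr _ * ?_
  refine setLIntegral_mono (hu.energyDensity.const_mul 4) fun q hq => ?_
  exact energyDensity_evenExtension_quadrants_le hα (Set.mem_prod.mp hq).1 (Set.mem_prod.mp hq).2

end Energy

theorem restricted_embedding_general (n : ℕ) [NeZero n] (s : ℝ)
    (hs : s ∈ Set.Ioo (0 : ℝ) 1)
    (u : Rn n → ℝ) (hu : Measurable u)
    (hLp : eLpNorm u (pStar n s) (volume.restrict (Hplus n)) < ⊤) :
    (1 / 4 : ℝ≥0∞) * Ss n s * (eLpNorm u (pStar n s) (volume.restrict (Hplus n))) ^ 2 ≤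
      Es n s u ((Hplus n) ×ˢ (Hplus n)) := by
  have hα : 0 ≤ (n : ℝ) + 2 * s := by linarith [hs.1, (n.cast_nonneg : (0 : ℝ) ≤ n)]
  calc (1 / 4 : ℝ≥0∞) * Ss n s * eLpNorm u (pStar n s) (volume.restrict (Hplus n)) ^ 2
      ≤ 1 / 4 * (Ss n s * eLpNorm (evenExtension u) (pStar n s) volume ^ 2) := by
        rw [mul_assoc]
        gcongr
        exact eLpNorm_restrict_Hplus_le_evenExtension _
    _ ≤ 1 / 4 * Es n s (evenExtension u) univ := by
        gcongr
        exact Ss_mul_eLpNorm_sq_le hu.evenExtension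
          (eLpNorm_evenExtension_lt_top ENNReal.ofReal_ne_top hLp)
    _ ≤ 1 / 4 * (4 * Es n s u (Hplus n ×ˢ Hplus n)) := by
        gcongr
        exact Es_evenExtension_le hα hu
    _ = Es n s u (Hplus n ×ˢ Hplus n) := by
        rw [← mul_assoc, one_div, ENNReal.inv_mul_cancel (by norm_num) (by norm_num), one_mul]

/-- For every measurable `u` on `ℝ^n_+` with `u ∈ L^{2*_s}(ℝ^n_+)` and
`E_s(u;ℝ^n_+×ℝ^n_+) < ∞` one has `E_s(u;ℝ^n_+×ℝ^n_+) ≥ (1/4)·S_s·‖u‖²_{L^{2*_s}(ℝ^n_+)}`;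
in particular `D^s_R(ℝ^n_+)` embeds continuously into `L^{2*_s}(ℝ^n_+)`. -/
theorem restricted_embedding (n : ℕ) [NeZero n] (s : ℝ)
    (hs : s ∈ Set.Ioo (0 : ℝ) 1) (hns : 2 * s < n)
    (u : Rn n → ℝ) (hu : Measurable u)
    (hLp : eLpNorm u (pStar n s) (volume.restrict (Hplus n)) < ⊤)
    (hE : Es n s u ((Hplus n) ×ˢ (Hplus n)) < ⊤) :
    (1 / 4 : ℝ≥0∞) * Ss n s * (eLpNorm u (pStar n s) (volume.restrict (Hplus n))) ^ 2 ≤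
      Es n s u ((Hplus n) ×ˢ (Hplus n)) :=
  restricted_embedding_general n s hs u hu hLp
end
end

section
/- Let E ⊆ ℝ^n_+ be a bounded measurable set of positive Lebesgue measure. Then 𝒫_s χ_E does not belong to L¹(ℝ^n_-); that is, ∫_{ℝ^n_-} (𝒫_s χ_E)(x) dx = +∞. -/
open MeasureTheory Set Filter Topology
open scoped ENNReal

noncomputable section

/-- The extension operator `𝒫_s`, defined on `ℝ^n_-` by
`(𝒫_s u)(x) = (C_{n,s}/γ_s)·|x₁|^{2s}·∫_{ℝ^n_+} u(y)·|x−y|^{−(n+2s)} dy`. -/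
def PsMinus (n : ℕ) [NeZero n] (s : ℝ) (u : Rn n → ℝ) (x : Rn n) : ℝ :=
  (Cns n s / gammaS s) * |x 0| ^ (2 * s) *
    ∫ y in Hplus n, u y / ‖x - y‖ ^ ((n : ℝ) + 2 * s)

/-
For `x` in the ball of radius `t ≥ 1` centred at `-2t e₀`, every `y ∈ E` satisfies
`t ≤ |x - y| ≤ (3 + R) t`, where `E ⊆ B(0, R)`. Hence
`𝒫_s χ_E (x) ≳ t^{2s} |E| / t^{n+2s} = |E| t^{-n}`, while the ball has volume `≍ t^n`:
each of the disjoint balls with `t = 3^k` contributes the same positive amount to the integral.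
-/

open scoped Function

theorem setLIntegral_eq_top_of_pairwise_disjoint {α ι : Type*} [MeasurableSpace α]
    [Countable ι] [Infinite ι] {μ : Measure α} {f : α → ℝ≥0∞} {A : Set α} {S : ι → Set α}
    (hSm : ∀ k, MeasurableSet (S k)) (hSd : Pairwise (Disjoint on S)) (hSA : ∀ k, S k ⊆ A)
    {c : ℝ≥0∞} (hc : c ≠ 0) (hcS : ∀ k, c ≤ ∫⁻ x in S k, f x ∂μ) :
    ∫⁻ x in A, f x ∂μ = ⊤ :=
  top_unique <| calc
    ⊤ = ∑' _ : ι, c := (ENNReal.tsum_const_eq_top_of_ne_zero hc).symm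
    _ ≤ ∑' k, ∫⁻ x in S k, f x ∂μ := ENNReal.tsum_le_tsum hcS
    _ = ∫⁻ x in ⋃ k, S k, f x ∂μ := (lintegral_iUnion hSm hSd f).symm
    _ ≤ ∫⁻ x in A, f x ∂μ := lintegral_mono_set (iUnion_subset hSA)

theorem pairwise_disjoint_Ioo_pow_succ {α : Type*} [Semiring α] [PartialOrder α]
    [IsOrderedRing α] {b : α} (hb : 1 ≤ b) :
    Pairwise (Disjoint on fun k : ℕ => Ioo (b ^ k) (b ^ (k + 1))) :=
  (pairwise_disjoint_on _).2 fun _ _ hkl => Set.disjoint_left.2 fun _ hk hl =>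
    lt_irrefl _ ((hk.2.trans_le (pow_le_pow_right₀ hb hkl)).trans hl.1)

theorem measureReal_div_rpow_le_setIntegral_indicator_div_rpow {X : Type*}
    [NormedAddCommGroup X] [MeasurableSpace X] [OpensMeasurableSpace X] {μ : Measure X}
    {E H : Set X} (hE : MeasurableSet E) (hEH : E ⊆ H) (hEfin : μ E ≠ ⊤) {x : X} {a r p : ℝ}
    (ha : 0 < a) (hp : 0 ≤ p) (hdist : ∀ y ∈ E, a ≤ ‖x - y‖ ∧ ‖x - y‖ ≤ r) :
    μ.real E / r ^ p ≤ ∫ y in H, E.indicator (fun _ => (1 : ℝ)) y / ‖x - y‖ ^ p ∂μ := by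
  have hrestrict : ∫ y in H, E.indicator (fun _ => (1 : ℝ)) y / ‖x - y‖ ^ p ∂μ
      = ∫ y in E, (‖x - y‖ ^ p)⁻¹ ∂μ := by
    have hind : (fun y => E.indicator (fun _ => (1 : ℝ)) y / ‖x - y‖ ^ p)
        = E.indicator fun y => (‖x - y‖ ^ p)⁻¹ := by
      funext y
      by_cases hy : y ∈ E <;> simp [hy]
    rw [hind, setIntegral_indicator hE, inter_eq_right.2 hEH]
  have hbounds : ∀ y ∈ E, (r ^ p)⁻¹ ≤ (‖x - y‖ ^ p)⁻¹ ∧ (‖x - y‖ ^ p)⁻¹ ≤ (a ^ p)⁻¹ := by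
    intro y hy
    obtain ⟨hlow, hup⟩ := hdist y hy
    have hxy : 0 < ‖x - y‖ := ha.trans_le hlow
    exact ⟨inv_anti₀ (by positivity) (Real.rpow_le_rpow hxy.le hup hp),
      inv_anti₀ (by positivity) (Real.rpow_le_rpow ha.le hlow hp)⟩
  have hint : IntegrableOn (fun y => (‖x - y‖ ^ p)⁻¹) E μ := by
    refine Measure.integrableOn_of_bounded hEfin (M := (a ^ p)⁻¹)
      ((continuous_const.sub continuous_id).norm.measurable.pow_const p).inv.aestronglyMeasurable ?_
    refine (ae_restrict_iff' hE).2 (ae_of_all _ fun y hy => ?_)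
    rw [Real.norm_of_nonneg (by positivity)]
    exact (hbounds y hy).2
  rw [hrestrict, div_eq_mul_inv, mul_comm]
  exact setIntegral_ge_of_const_le_real hE hEfin (fun y hy => (hbounds y hy).1) hint

theorem Cns_div_gammaS_pos {n : ℕ} {s : ℝ} (hs : s ∈ Ioo (0 : ℝ) 1) : 0 < Cns n s / gammaS s := by
  obtain ⟨hs0, hs1⟩ := hs
  have hG : 0 < Real.Gamma (1 - s) := Real.Gamma_pos_of_pos (by linarith)
  unfold Cns gammaS
  have := Real.Gamma_pos_of_pos (show 0 < (n : ℝ) / 2 + s by positivity)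
  have := Real.Gamma_pos_of_pos (show 0 < s + 1 / 2 by positivity)
  have := Real.pi_pos
  positivity

def negBall (n : ℕ) [NeZero n] (t : ℝ) : Set (Rn n) :=
  Metric.ball (EuclideanSpace.single 0 (-2 * t)) t

section negBall

variable {n : ℕ} [NeZero n] {t : ℝ} {x : Rn n}

theorem neg_coord_mem_Ioo_of_mem_negBall (hx : x ∈ negBall n t) : -x 0 ∈ Ioo t (3 * t) := by
  have h := (PiLp.norm_apply_le (x - EuclideanSpace.single 0 (-2 * t)) 0).trans_lt
    (mem_ball_iff_norm.1 hx)
  rw [PiLp.sub_apply, PiLp.single_apply, if_pos rfl, Real.norm_eq_abs, abs_lt] at h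
  constructor <;> linarith [h.1, h.2]

theorem norm_lt_of_mem_negBall (hx : x ∈ negBall n t) : ‖x‖ < 3 * t := by
  have ht : 0 < t := Metric.pos_of_mem_ball hx
  have hcentre : ‖EuclideanSpace.single (0 : Fin n) (-2 * t)‖ = 2 * t := by
    rw [PiLp.norm_single, Real.norm_eq_abs, abs_of_neg (by linarith)]; ring
  linarith [norm_le_norm_sub_add x (EuclideanSpace.single 0 (-2 * t)), mem_ball_iff_norm.1 hx]

theorem negBall_subset_Hminus : negBall n t ⊆ Hminus n := fun x hx => by
  have h := neg_coord_mem_Ioo_of_mem_negBall hx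
  have ht : 0 < t := Metric.pos_of_mem_ball hx
  show x 0 < 0
  linarith [h.1]

theorem volume_negBall (ht : 0 < t) :
    volume (negBall n t) = ENNReal.ofReal (t ^ n) * volume (Metric.ball (0 : Rn n) 1) := by
  rw [negBall, Measure.addHaar_ball_of_pos _ _ ht, finrank_euclideanSpace_fin]

theorem pairwise_disjoint_negBall_three_pow :
    Pairwise (Disjoint on fun k : ℕ => negBall n (3 ^ k)) := fun k l hkl =>
  ((pairwise_disjoint_Ioo_pow_succ (by norm_num : (1 : ℝ) ≤ 3) hkl).preimage
    (fun x : Rn n => -x 0)).mono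
    (fun x hx => by simpa [pow_succ, mul_comm] using neg_coord_mem_Ioo_of_mem_negBall hx)
    (fun x hx => by simpa [pow_succ, mul_comm] using neg_coord_mem_Ioo_of_mem_negBall hx)

end negBall

section PsMinus

variable {n : ℕ} [NeZero n] {s : ℝ} {E : Set (Rn n)} {R t : ℝ}

theorem le_PsMinus_indicator_of_mem_negBall (hs : s ∈ Ioo (0 : ℝ) 1) (hEm : MeasurableSet E)
    (hEsub : E ⊆ Hplus n) (hER : E ⊆ Metric.closedBall 0 R) (hEfin : volume E ≠ ⊤)
    (hR : 0 ≤ R) (ht : 1 ≤ t) {x : Rn n} (hx : x ∈ negBall n t) :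
    Cns n s / gammaS s * t ^ (2 * s) * (volume.real E / ((3 + R) * t) ^ ((n : ℝ) + 2 * s))
      ≤ PsMinus n s (E.indicator fun _ => (1 : ℝ)) x := by
  have hx0 := neg_coord_mem_Ioo_of_mem_negBall hx
  have hdist : ∀ y ∈ E, t ≤ ‖x - y‖ ∧ ‖x - y‖ ≤ (3 + R) * t := by
    intro y hy
    have hy0 : 0 < y 0 := hEsub hy
    have hyR : ‖y‖ ≤ R := mem_closedBall_zero_iff.1 (hER hy)
    have hxy0 : |(x - y) 0| ≤ ‖x - y‖ := PiLp.norm_apply_le (x - y) 0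
    rw [PiLp.sub_apply, abs_of_neg (by linarith [hx0.1])] at hxy0
    refine ⟨by linarith [hx0.1], ?_⟩
    calc ‖x - y‖ ≤ ‖x‖ + ‖y‖ := norm_sub_le _ _
      _ ≤ 3 * t + R * t := by
          linarith [norm_lt_of_mem_negBall hx, le_mul_of_one_le_right hR ht]
      _ = (3 + R) * t := by ring
  have hinner := measureReal_div_rpow_le_setIntegral_indicator_div_rpow hEm hEsub hEfin
    (one_pos.trans_le ht) (by linarith [hs.1] : (0 : ℝ) ≤ n + 2 * s) hdist
  have hpow : t ^ (2 * s) ≤ |x 0| ^ (2 * s) := by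
    rw [abs_of_neg (by linarith [hx0.1, hx0.2] : x 0 < 0)]
    exact Real.rpow_le_rpow (by linarith) hx0.1.le (by linarith [hs.1])
  unfold PsMinus
  have hK := Cns_div_gammaS_pos (n := n) hs
  gcongr

theorem le_setLIntegral_negBall_PsMinus_indicator (hs : s ∈ Ioo (0 : ℝ) 1)
    (hEm : MeasurableSet E) (hEsub : E ⊆ Hplus n) (hER : E ⊆ Metric.closedBall 0 R)
    (hEfin : volume E ≠ ⊤) (hR : 0 ≤ R) (ht : 1 ≤ t) :
    ENNReal.ofReal (Cns n s / gammaS s * volume.real E / (3 + R) ^ ((n : ℝ) + 2 * s)) *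
        volume (Metric.ball (0 : Rn n) 1)
      ≤ ∫⁻ x in negBall n t, ENNReal.ofReal (PsMinus n s (E.indicator fun _ => (1 : ℝ)) x) := by
  have ht0 : 0 < t := one_pos.trans_le ht
  have hscale : Cns n s / gammaS s * volume.real E / (3 + R) ^ ((n : ℝ) + 2 * s)
      = Cns n s / gammaS s * t ^ (2 * s) * (volume.real E / ((3 + R) * t) ^ ((n : ℝ) + 2 * s))
        * t ^ n := by
    rw [Real.mul_rpow (by positivity) ht0.le, Real.rpow_add ht0, ← Real.rpow_natCast t n]
    field_simp
  have hK := Cns_div_gammaS_pos (n := n) hs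
  calc _ = ENNReal.ofReal (Cns n s / gammaS s * t ^ (2 * s) *
          (volume.real E / ((3 + R) * t) ^ ((n : ℝ) + 2 * s))) * volume (negBall n t) := by
        rw [volume_negBall ht0, ← mul_assoc, ← ENNReal.ofReal_mul (by positivity), ← hscale]
    _ = ∫⁻ _ in negBall n t, ENNReal.ofReal (Cns n s / gammaS s * t ^ (2 * s) *
          (volume.real E / ((3 + R) * t) ^ ((n : ℝ) + 2 * s))) := (setLIntegral_const _ _).symm
    _ ≤ _ := setLIntegral_mono' measurableSet_ball fun x hx => ENNReal.ofReal_le_ofReal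
          (le_PsMinus_indicator_of_mem_negBall hs hEm hEsub hER hEfin hR ht hx)

end PsMinus

/-- If `E ⊆ ℝ^n_+` is bounded, measurable and of positive measure,
then `𝒫_s χ_E ∉ L¹(ℝ^n_-)`. -/
theorem PsMinus_indicator_not_L1 (n : ℕ) [NeZero n] (s : ℝ) (hs : s ∈ Set.Ioo (0 : ℝ) 1)
    (E : Set (Rn n)) (hEm : MeasurableSet E) (hEsub : E ⊆ Hplus n)
    (hEb : Bornology.IsBounded E) (hEpos : 0 < volume E) :
    ∫⁻ x in Hminus n,
        ENNReal.ofReal (PsMinus n s (E.indicator fun _ => (1 : ℝ)) x) = ⊤ := by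
  obtain ⟨R, hR, hER⟩ := hEb.subset_closedBall_lt 0 0
  have hEfin : volume E ≠ ⊤ := hEb.measure_lt_top.ne
  have hc : 0 < Cns n s / gammaS s * volume.real E / (3 + R) ^ ((n : ℝ) + 2 * s) := by
    have hK := Cns_div_gammaS_pos (n := n) hs
    have hV : 0 < volume.real E := ENNReal.toReal_pos hEpos.ne' hEfin
    positivity
  refine setLIntegral_eq_top_of_pairwise_disjoint (fun _ => measurableSet_ball)
    pairwise_disjoint_negBall_three_pow (fun _ => negBall_subset_Hminus)
    (mul_ne_zero (ENNReal.ofReal_pos.2 hc).ne' (Metric.measure_ball_pos _ _ one_pos).ne')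
    fun k => le_setLIntegral_negBall_PsMinus_indicator hs hEm hEsub hER hEfin hR.le
      (one_le_pow₀ (by norm_num))
end
end
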